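/- Let v : (Fin n → ℝ≥0) → ℝ be a nonnegative, weakly increasing SOS valuation, fix agent i and profile s, and let A be a random subset of [n]\{i} including each element independently with probability p ∈ [0,1]; let B = ([n]\{i})\A. Then E_A[v(s_A, 0_B, s_i)] ≥ p · v(s). -/

import Mathlib

/-!
By the SOS condition, `A ↦ v(s_A, 0_B, s_i)` is a submodular set
function on `[n] \ {i}`. For a submodular `f` on `E`, the expectation of `f` over a `p`-random subset
of `E` is at least `(1 - p) f(∅) + p f(E)`: induct on `E`, conditioning on whether a fixed element
`e` is sampled; the two conditional expectations are bounded by the induction hypothesis, and what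
remains is `p (1 - p)` times the diminishing-returns inequality `f(E) - f(E \ e) ≤ f({e}) - f(∅)`.
Dropping the nonnegative term `(1 - p) v(s_i, 0_{-i})` gives the claim.
-/

def SOS {n : ℕ} (v : (Fin n → NNReal) → ℝ) : Prop :=
  ∀ (i : Fin n) (s s' : Fin n → NNReal) (t : NNReal), s ≤ s' → s' i = s i → s i ≤ t →
    v (Function.update s' i t) - v s' ≤ v (Function.update s i t) - v s

def zeroOutside {n : ℕ} (s : Fin n → NNReal) (i : Fin n) (A : Finset (Fin n)) :
    Fin n → NNReal :=
  fun j => if j = i ∨ j ∈ A then s j else 0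

open Finset

section BernoulliAverage

variable {ι : Type*}

/-- The expectation of `f A` for a random `A ⊆ E` containing each element independently with
probability `p`. -/
def bernoulliAverage (p : ℝ) (E : Finset ι) (f : Finset ι → ℝ) : ℝ :=
  ∑ A ∈ E.powerset, p ^ #A * (1 - p) ^ (#E - #A) * f A

theorem bernoulliAverage_empty (p : ℝ) (f : Finset ι → ℝ) : bernoulliAverage p ∅ f = f ∅ := by
  simp [bernoulliAverage]

variable [DecidableEq ι]

def IsSubmodularOn (f : Finset ι → ℝ) (E : Finset ι) : Prop :=
  ∀ ⦃A B : Finset ι⦄ ⦃e : ι⦄, A ⊆ B → B ⊆ E → e ∈ E → e ∉ B →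
    f (insert e B) - f B ≤ f (insert e A) - f A

theorem bernoulliAverage_insert (p : ℝ) {E : Finset ι} {e : ι} (he : e ∉ E)
    (f : Finset ι → ℝ) :
    bernoulliAverage p (insert e E) f =
      (1 - p) * bernoulliAverage p E f + p * bernoulliAverage p E (fun A => f (insert e A)) := by
  rw [bernoulliAverage, sum_powerset_insert he, bernoulliAverage, bernoulliAverage,
    mul_sum, mul_sum, card_insert_of_notMem he]
  congr 1 <;> refine sum_congr rfl fun A hA => ?_
  · have : #A ≤ #E := card_le_card (mem_powerset.mp hA)
    rw [Nat.sub_add_comm this, pow_succ]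
    ring
  · have heA : e ∉ A := fun h => he (mem_powerset.mp hA h)
    rw [card_insert_of_notMem heA, Nat.add_sub_add_right, pow_succ]
    ring

namespace IsSubmodularOn

variable {f : Finset ι → ℝ} {E : Finset ι} {e : ι}

theorem mono {E' : Finset ι} (hf : IsSubmodularOn f E) (hE' : E' ⊆ E) : IsSubmodularOn f E' :=
  fun _ _ _ hAB hBE he heB => hf hAB (hBE.trans hE') (hE' he) heB

theorem comp_insert (hf : IsSubmodularOn f (insert e E)) (he : e ∉ E) :
    IsSubmodularOn (fun A => f (insert e A)) E := by
  intro A B e' hAB hBE he'E he'B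
  have he'e : e' ≠ e := fun h => he (h ▸ he'E)
  have := hf (insert_subset_insert e hAB) (insert_subset_insert e hBE) (mem_insert_of_mem he'E)
    (by simp [he'e, he'B])
  simpa only [insert_comm e' e] using this

theorem interpolate_le_bernoulliAverage {p : ℝ} (hp0 : 0 ≤ p) (hp1 : p ≤ 1)
    (hf : IsSubmodularOn f E) : (1 - p) * f ∅ + p * f E ≤ bernoulliAverage p E f := by
  induction E using Finset.induction_on generalizing f with
  | empty => rw [bernoulliAverage_empty]; linarith
  | @insert e E he ih =>
    have h_without := ih (hf.mono (subset_insert e E))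
    have h_with := ih (hf.comp_insert he)
    have h_returns : f (insert e E) - f E ≤ f (insert e ∅) - f ∅ :=
      hf (empty_subset E) (subset_insert e E) (mem_insert_self e E) he
    rw [bernoulliAverage_insert p he]
    linarith [mul_le_mul_of_nonneg_left h_without (sub_nonneg.mpr hp1),
      mul_le_mul_of_nonneg_left h_with hp0,
      mul_le_mul_of_nonneg_left h_returns (mul_nonneg hp0 (sub_nonneg.mpr hp1))]

end IsSubmodularOn

end BernoulliAverage

section ZeroOutside

variable {n : ℕ} (s : Fin n → NNReal) (i : Fin n)

theorem zeroOutside_mono {A B : Finset (Fin n)} (hAB : A ⊆ B) :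
    zeroOutside s i A ≤ zeroOutside s i B := by
  intro j
  by_cases hj : j = i ∨ j ∈ A
  · have : j = i ∨ j ∈ B := hj.imp_right (@hAB j)
    simp only [zeroOutside, hj, this, if_true, le_refl]
  · simp only [zeroOutside, hj, if_false, zero_le]

theorem zeroOutside_of_ne_of_notMem {A : Finset (Fin n)} {e : Fin n} (hei : e ≠ i) (heA : e ∉ A) :
    zeroOutside s i A e = 0 := by
  simp [zeroOutside, hei, heA]

theorem update_zeroOutside (A : Finset (Fin n)) (e : Fin n) :
    Function.update (zeroOutside s i A) e (s e) = zeroOutside s i (insert e A) := by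
  funext j
  by_cases hj : j = e
  · subst hj
    simp [zeroOutside]
  · simp [zeroOutside, hj]

theorem zeroOutside_univ_erase : zeroOutside s i (univ.erase i) = s := by
  funext j
  by_cases hj : j = i <;> simp [zeroOutside, hj]

theorem SOS.isSubmodularOn_zeroOutside {v : (Fin n → NNReal) → ℝ} (hv : SOS v) :
    IsSubmodularOn (fun A => v (zeroOutside s i A)) (univ.erase i) := by
  intro A B e hAB _ heE heB
  have hei : e ≠ i := ne_of_mem_erase heE
  have hA0 := zeroOutside_of_ne_of_notMem s i hei (fun h => heB (hAB h))
  have hB0 := zeroOutside_of_ne_of_notMem s i hei heB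
  have := hv e _ _ (s e) (zeroOutside_mono s i hAB) (hB0.trans hA0.symm) (hA0 ▸ zero_le)
  simpa only [update_zeroOutside] using this

end ZeroOutside

theorem stmt_8_general {n : ℕ} (v : (Fin n → NNReal) → ℝ)
    (hnonneg : ∀ s, 0 ≤ v s) (hsos : SOS v)
    (s : Fin n → NNReal) (i : Fin n) (p : ℝ) (hp0 : 0 ≤ p) (hp1 : p ≤ 1) :
    ∑ A ∈ (Finset.univ.erase i).powerset,
        p ^ A.card * (1 - p) ^ (n - 1 - A.card) * v (zeroOutside s i A) ≥
      p * v s := by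
  have key := (hsos.isSubmodularOn_zeroOutside s i).interpolate_le_bernoulliAverage hp0 hp1
  rw [zeroOutside_univ_erase, bernoulliAverage, card_erase_of_mem (mem_univ i), card_univ,
    Fintype.card_fin] at key
  have h_empty : 0 ≤ (1 - p) * v (zeroOutside s i ∅) :=
    mul_nonneg (sub_nonneg.mpr hp1) (hnonneg _)
  linarith

theorem stmt_8 {n : ℕ} (v : (Fin n → NNReal) → ℝ)
    (hnonneg : ∀ s, 0 ≤ v s) (hmono : Monotone v) (hsos : SOS v)
    (s : Fin n → NNReal) (i : Fin n) (p : ℝ) (hp0 : 0 ≤ p) (hp1 : p ≤ 1) :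
    ∑ A ∈ (Finset.univ.erase i).powerset,
        p ^ A.card * (1 - p) ^ (n - 1 - A.card) * v (zeroOutside s i A) ≥
      p * v s :=
  stmt_8_general v hnonneg hsos s i p hp0 hp1
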